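/- Fix v₀ ∈ Con_L ∖ {0} and let ℋ₀ = ker b_L(v₀, ·). For every compact subset K of the projectivization of Con_L ∖ ℋ₀, the quantity |odist(Hb_{v₀}, Hb_w) − 2√2 ln ‖w‖| is bounded uniformly over all nonzero w ∈ Con_L whose line lies in K. -/

import Mathlib

open Matrix

/-- `𝒫_s(L)`: minimal positive definite forms `Q` with `|L(x)| ≤ Q(x)` for all `x`. -/
def PsL {s : ℕ} (L : Matrix (Fin s) (Fin s) ℝ) : Set (Matrix (Fin s) (Fin s) ℝ) :=
  {Q | Q.PosDef ∧ (∀ x : Fin s → ℝ, |x ⬝ᵥ L.mulVec x| ≤ x ⬝ᵥ Q.mulVec x) ∧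
    ∀ Q' : Matrix (Fin s) (Fin s) ℝ, Q'.PosDef →
      (∀ x : Fin s → ℝ, |x ⬝ᵥ L.mulVec x| ≤ x ⬝ᵥ Q'.mulVec x) →
      (∀ x : Fin s → ℝ, x ⬝ᵥ Q'.mulVec x ≤ x ⬝ᵥ Q.mulVec x) → Q' = Q}

/-- Evaluation `Q(v)` of the quadratic form with matrix `Q` at `v`. -/
noncomputable def quadEval {s : ℕ} (Q : Matrix (Fin s) (Fin s) ℝ) (v : Fin s → ℝ) : ℝ :=
  v ⬝ᵥ Q.mulVec v

/-- The oriented distance `odist(Hb_v, Hb_w) = inf_{Q ∈ Hb_w} f_v(Q)` between the horoballs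
`Hb_v = {f_v ≤ 0}` and `Hb_w = {f_w ≤ 0}` in `𝒫_s(L)`, where `f_u(Q) = √2 ln Q(u)`. -/
noncomputable def odistHb {s : ℕ} (L : Matrix (Fin s) (Fin s) ℝ) (v w : Fin s → ℝ) : ℝ :=
  sInf ((fun Q => Real.sqrt 2 * Real.log (quadEval Q v)) ''
    {Q | Q ∈ PsL L ∧ Real.sqrt 2 * Real.log (quadEval Q w) ≤ 0})

namespace S13

lemma ext_of_mulVec {M N : Matrix (Fin s) (Fin s) ℝ} (h : ∀ y, M *ᵥ y = N *ᵥ y) : M = N := by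
  ext i j
  simpa [Matrix.mulVec_single] using congrFun (h (Pi.single j 1)) i

lemma dot_symm {M : Matrix (Fin s) (Fin s) ℝ} (hM : Mᵀ = M) (x y : Fin s → ℝ) :
    x ⬝ᵥ M *ᵥ y = y ⬝ᵥ M *ᵥ x := by
  have hx : x ᵥ* M = M *ᵥ x := by
    conv_lhs => rw [← hM]
    rw [Matrix.vecMul_transpose]
  rw [Matrix.dotProduct_mulVec, hx, dotProduct_comm]

lemma quad_expand (A : Matrix (Fin s) (Fin s) ℝ) (x y : Fin s → ℝ) (α β : ℝ) :
    (α • x + β • y) ⬝ᵥ A *ᵥ (α • x + β • y) =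
      α^2 * (x ⬝ᵥ A *ᵥ x) + α*β*(x ⬝ᵥ A *ᵥ y) + α*β*(y ⬝ᵥ A *ᵥ x) + β^2 * (y ⬝ᵥ A *ᵥ y) := by
  simp [Matrix.mulVec_add, Matrix.mulVec_smul, dotProduct_add, add_dotProduct,
    dotProduct_smul, smul_dotProduct, smul_eq_mul]
  ring

lemma quad_smul (A : Matrix (Fin s) (Fin s) ℝ) (c : ℝ) (x : Fin s → ℝ) :
    (c • x) ⬝ᵥ A *ᵥ (c • x) = c^2 * (x ⬝ᵥ A *ᵥ x) := by
  simp [Matrix.mulVec_smul, dotProduct_smul, smul_dotProduct, smul_eq_mul]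
  ring

lemma conj_quad (A Q : Matrix (Fin s) (Fin s) ℝ) (x : Fin s → ℝ) :
    x ⬝ᵥ (Aᵀ * Q * A) *ᵥ x = (A *ᵥ x) ⬝ᵥ Q *ᵥ (A *ᵥ x) := by
  rw [mul_assoc, ← Matrix.mulVec_mulVec, Matrix.dotProduct_mulVec x Aᵀ,
    Matrix.vecMul_transpose, ← Matrix.mulVec_mulVec]

lemma conjT_eq (M : Matrix (Fin s) (Fin s) ℝ) : Mᴴ = Mᵀ := by
  ext i j; simp [Matrix.conjTranspose_apply]

lemma posDef_of {M : Matrix (Fin s) (Fin s) ℝ} (hsymm : Mᵀ = M)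
    (h : ∀ x, x ≠ 0 → 0 < x ⬝ᵥ M *ᵥ x) : M.PosDef := by
  refine Matrix.PosDef.of_dotProduct_mulVec_pos ?_ fun x hx => ?_
  · rw [Matrix.IsHermitian, conjT_eq]; exact hsymm
  · simpa using h x hx

lemma posDef_symm {M : Matrix (Fin s) (Fin s) ℝ} (h : M.PosDef) : Mᵀ = M := by
  have := h.1; rwa [Matrix.IsHermitian, conjT_eq] at this

lemma posDef_quad_pos {M : Matrix (Fin s) (Fin s) ℝ} (h : M.PosDef) {x : Fin s → ℝ}
    (hx : x ≠ 0) : 0 < x ⬝ᵥ M *ᵥ x := by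
  simpa using h.dotProduct_mulVec_pos hx

lemma psd_mulVec_eq_zero {M : Matrix (Fin s) (Fin s) ℝ} (hM : Mᵀ = M)
    (hpos : ∀ x, 0 ≤ x ⬝ᵥ M *ᵥ x) {x : Fin s → ℝ} (hx : x ⬝ᵥ M *ᵥ x = 0) : M *ᵥ x = 0 := by
  have key : ∀ y, x ⬝ᵥ M *ᵥ y = 0 := by
    intro y
    set a := y ⬝ᵥ M *ᵥ y with ha'
    set d := x ⬝ᵥ M *ᵥ y with hd'
    have ha : 0 ≤ a := hpos y
    have hq : ∀ t : ℝ, 0 ≤ t^2 * a + 2*t*d := by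
      intro t
      have h0 := hpos ((1:ℝ) • x + t • y)
      rw [quad_expand] at h0
      rw [dot_symm hM y x] at h0
      simp only [one_pow, one_mul, hx] at h0
      linarith
    by_contra hd
    have hd2 : 0 < d^2 := by positivity
    have hapos : 0 < a + 1 := by linarith
    have h1 := hq (-(d/(a+1)))
    have heq : (-(d/(a+1)))^2 * a + 2*(-(d/(a+1)))*d = (-(d^2*(a+2)))/((a+1)^2) := by
      field_simp; ring
    have hlt : (-(d^2*(a+2)))/((a+1)^2) < 0 :=
      div_neg_of_neg_of_pos (by nlinarith) (by positivity)
    rw [heq] at h1; linarith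
  have h5 : (M *ᵥ x) ⬝ᵥ (M *ᵥ x) = 0 := by
    rw [← dot_symm hM x (M *ᵥ x)] at *
    · exact key (M *ᵥ x)
  rwa [dotProduct_self_eq_zero] at h5

lemma eq_of_quad_eq {M N : Matrix (Fin s) (Fin s) ℝ} (hM : Mᵀ = M) (hN : Nᵀ = N)
    (h : ∀ x, x ⬝ᵥ M *ᵥ x = x ⬝ᵥ N *ᵥ x) : M = N := by
  have e : ∀ (A : Matrix (Fin s) (Fin s) ℝ) (i j : Fin s),
      (Pi.single i (1:ℝ)) ⬝ᵥ A *ᵥ (Pi.single j 1) = A i j := by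
    intro A i j
    simp [Matrix.mulVec_single, single_dotProduct]
  ext i j
  have h2 := h ((1:ℝ) • (Pi.single i 1 : Fin s → ℝ) + (1:ℝ) • (Pi.single j 1 : Fin s → ℝ))
  rw [quad_expand, quad_expand] at h2
  have hi := h (Pi.single i 1)
  have hj := h (Pi.single j 1)
  have hMij : M j i = M i j := by
    have := congrFun (congrFun hM i) j
    simpa [Matrix.transpose_apply] using this
  have hNij : N j i = N i j := by
    have := congrFun (congrFun hN i) j
    simpa [Matrix.transpose_apply] using this
  simp only [e] at h2 hi hj
  nlinarith [h2, hi, hj, hMij, hNij]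

lemma dot_self_pos {y : Fin s → ℝ} (hy : y ≠ 0) : 0 < y ⬝ᵥ y := by
  have h1 : 0 ≤ y ⬝ᵥ y := Finset.sum_nonneg fun i _ => mul_self_nonneg _
  rcases h1.lt_or_eq with h | h
  · exact h
  · exact absurd (dotProduct_self_eq_zero.1 h.symm) hy

lemma mem_PsL_of_conj {L P : Matrix (Fin s) (Fin s) ℝ} (hL : Lᵀ = L) (hLdet : L.det ≠ 0)
    {ε : Fin s → ℝ} (hε : ∀ i, ε i = 1 ∨ ε i = -1)
    (hP : Pᵀ * L * P = diagonal ε) : (P⁻¹)ᵀ * P⁻¹ ∈ PsL L := by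
  have hdiagdet : (diagonal ε).det ≠ 0 := by
    rw [Matrix.det_diagonal]
    exact Finset.prod_ne_zero_iff.2 fun i _ => by rcases hε i with h | h <;> rw [h] <;> norm_num
  have hdet : IsUnit P.det := by
    rw [isUnit_iff_ne_zero]
    intro h0
    apply hdiagdet
    rw [← hP, Matrix.det_mul, Matrix.det_mul, Matrix.det_transpose, h0]
    ring
  set g := P⁻¹ with hg
  have hgP : g * P = 1 := Matrix.nonsing_inv_mul P hdet
  have hPg : P * g = 1 := Matrix.mul_nonsing_inv P hdet
  have hgPv : ∀ c, g *ᵥ (P *ᵥ c) = c := fun c => by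
    rw [Matrix.mulVec_mulVec, hgP, Matrix.one_mulVec]
  have hPgv : ∀ y, P *ᵥ (g *ᵥ y) = y := fun y => by
    rw [Matrix.mulVec_mulVec, hPg, Matrix.one_mulVec]
  have hQquad : ∀ x, x ⬝ᵥ (gᵀ * g) *ᵥ x = (g *ᵥ x) ⬝ᵥ (g *ᵥ x) := by
    intro x
    have h := conj_quad g 1 x
    simpa using h
  have hLeq : L = gᵀ * diagonal ε * g := by
    have h1 : (P * g)ᵀ * L * (P * g) = gᵀ * (Pᵀ * L * P) * g := by
      rw [Matrix.transpose_mul]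
      simp only [mul_assoc]
    rw [hPg] at h1
    simp only [Matrix.transpose_one, one_mul, mul_one] at h1
    rw [h1, hP]
  have hLquad : ∀ x, x ⬝ᵥ L *ᵥ x = (g *ᵥ x) ⬝ᵥ diagonal ε *ᵥ (g *ᵥ x) := by
    intro x
    conv_lhs => rw [hLeq]
    exact conj_quad g (diagonal ε) x
  have hdiagq : ∀ y : Fin s → ℝ, y ⬝ᵥ diagonal ε *ᵥ y = ∑ i, ε i * (y i)^2 := by
    intro y
    simp only [dotProduct, Matrix.mulVec_diagonal]
    exact Finset.sum_congr rfl fun i _ => by ring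
  have hdots : ∀ y : Fin s → ℝ, y ⬝ᵥ y = ∑ i, (y i)^2 := by
    intro y
    simp only [dotProduct]
    exact Finset.sum_congr rfl fun i _ => by ring
  have hQsymm : (gᵀ * g)ᵀ = gᵀ * g := by
    rw [Matrix.transpose_mul, Matrix.transpose_transpose]
  have hmaj : ∀ x, |x ⬝ᵥ L *ᵥ x| ≤ x ⬝ᵥ (gᵀ * g) *ᵥ x := by
    intro x
    rw [hLquad, hQquad, hdiagq, hdots]
    calc |∑ i, ε i * ((g *ᵥ x) i)^2| ≤ ∑ i, |ε i * ((g *ᵥ x) i)^2| :=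
          Finset.abs_sum_le_sum_abs _ _
      _ = ∑ i, ((g *ᵥ x) i)^2 := by
          refine Finset.sum_congr rfl fun i _ => ?_
          rcases hε i with h | h <;> rw [h] <;> simp [abs_of_nonneg, sq_nonneg, abs_mul]
  have hpd : (gᵀ * g).PosDef := by
    refine posDef_of hQsymm ?_
    intro x hx
    rw [hQquad]
    refine dot_self_pos ?_
    intro h0
    apply hx
    rw [← hPgv x, h0, Matrix.mulVec_zero]
  refine ⟨hpd, hmaj, ?_⟩
  intro Q' hQ' hmaj' hle'
  set M := gᵀ * g - Q' with hM
  have hMsymm : Mᵀ = M := by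
    rw [hM, Matrix.transpose_sub, hQsymm, posDef_symm hQ']
  have hMquad : ∀ x, x ⬝ᵥ M *ᵥ x = x ⬝ᵥ (gᵀ * g) *ᵥ x - x ⬝ᵥ Q' *ᵥ x := by
    intro x
    rw [hM, Matrix.sub_mulVec, dotProduct_sub]
  have hMpos : ∀ x, 0 ≤ x ⬝ᵥ M *ᵥ x := by
    intro x; rw [hMquad]; linarith [hle' x]
  have hsingle : ∀ (σ : ℝ), (σ = 1 ∨ σ = -1) → ∀ c : Fin s → ℝ,
      (∀ i, c i ≠ 0 → ε i = σ) → M *ᵥ (P *ᵥ c) = 0 := by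
    intro σ hσ c hc
    set x := P *ᵥ c with hx
    have hgx : g *ᵥ x = c := hgPv c
    have hxL : x ⬝ᵥ L *ᵥ x = σ * (∑ i, (c i)^2) := by
      rw [hLquad, hgx, hdiagq, Finset.mul_sum]
      refine Finset.sum_congr rfl fun i _ => ?_
      by_cases h0 : c i = 0
      · rw [h0]; ring
      · rw [hc i h0]
    have hxQ : x ⬝ᵥ (gᵀ * g) *ᵥ x = ∑ i, (c i)^2 := by rw [hQquad, hgx, hdots]
    have habs : |x ⬝ᵥ L *ᵥ x| = ∑ i, (c i)^2 := by
      rw [hxL, abs_mul]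
      have h2 : |σ| = 1 := by rcases hσ with h | h <;> rw [h] <;> norm_num
      rw [h2, one_mul, abs_of_nonneg (Finset.sum_nonneg fun i _ => sq_nonneg _)]
    have h3 : x ⬝ᵥ M *ᵥ x = 0 := by
      rw [hMquad]
      linarith [hmaj' x, hle' x, habs, hxQ]
    exact psd_mulVec_eq_zero hMsymm hMpos h3
  have hall : ∀ y, M *ᵥ y = 0 := by
    intro y
    set c := g *ᵥ y with hc
    have hy : y = P *ᵥ c := (hPgv y).symm
    set cp : Fin s → ℝ := fun i => if ε i = 1 then c i else 0 with hcp
    set cm : Fin s → ℝ := fun i => if ε i = 1 then 0 else c i with hcm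
    have hsum : cp + cm = c := by
      funext i
      by_cases h : ε i = 1 <;> simp [hcp, hcm, h]
    have h1 : M *ᵥ (P *ᵥ cp) = 0 := by
      refine hsingle 1 (Or.inl rfl) cp fun i hi => ?_
      by_cases h : ε i = 1
      · exact h
      · exact absurd (by simp [hcp, h]) hi
    have h2 : M *ᵥ (P *ᵥ cm) = 0 := by
      refine hsingle (-1) (Or.inr rfl) cm fun i hi => ?_
      by_cases h : ε i = 1
      · exact absurd (by simp [hcm, h]) hi
      · rcases hε i with h' | h'
        · exact absurd h' h
        · exact h'
    calc M *ᵥ y = M *ᵥ (P *ᵥ cp) + M *ᵥ (P *ᵥ cm) := by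
          rw [hy, ← hsum, Matrix.mulVec_add, Matrix.mulVec_add]
      _ = 0 := by rw [h1, h2, add_zero]
  have hM0 : gᵀ * g - Q' = 0 := by
    rw [← hM]
    exact ext_of_mulVec fun y => by rw [hall y, Matrix.zero_mulVec]
  exact (sub_eq_zero.mp hM0).symm

lemma exists_conj_diag (L : Matrix (Fin s) (Fin s) ℝ) (hL : Lᵀ = L) (hLdet : L.det ≠ 0) :
    ∃ (P : Matrix (Fin s) (Fin s) ℝ) (ε : Fin s → ℝ), (∀ i, ε i = 1 ∨ ε i = -1) ∧
      Pᵀ * L * P = diagonal ε := by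
  have hH : L.IsHermitian := by rw [Matrix.IsHermitian, conjT_eq]; exact hL
  have hspec : star (hH.eigenvectorUnitary : Matrix (Fin s) (Fin s) ℝ) * L *
      (hH.eigenvectorUnitary : Matrix (Fin s) (Fin s) ℝ) = diagonal hH.eigenvalues := by
    have h := hH.conjStarAlgAut_star_eigenvectorUnitary
    simp only [Unitary.conjStarAlgAut_apply, Unitary.coe_star, star_star] at h
    exact h
  set U : Matrix (Fin s) (Fin s) ℝ := (hH.eigenvectorUnitary : Matrix (Fin s) (Fin s) ℝ) with hU
  set lam := hH.eigenvalues with hlamdef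
  have hstar : star U = Uᵀ := by rw [Matrix.star_eq_conjTranspose, conjT_eq]
  have hdiag : Uᵀ * L * U = diagonal lam := by
    rw [← hstar]
    convert hspec using 2
  have hlam : ∀ i, lam i ≠ 0 := by
    have hprod := hH.det_eq_prod_eigenvalues
    intro i h0
    apply hLdet
    rw [hprod]
    refine Finset.prod_eq_zero (Finset.mem_univ i) ?_
    rw [← hlamdef] at *
    simpa using h0
  set d : Fin s → ℝ := fun i => (Real.sqrt |lam i|)⁻¹ with hd
  refine ⟨U * diagonal d, fun i => d i * lam i * d i, ?_, ?_⟩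
  · intro i
    have h1 : 0 < |lam i| := abs_pos.2 (hlam i)
    have h2 : d i ^ 2 = |lam i|⁻¹ := by
      rw [hd]
      simp only []
      rw [← Real.sqrt_inv]
      exact Real.sq_sqrt (by positivity)
    have h3 : d i * lam i * d i = lam i * |lam i|⁻¹ := by
      have : d i * lam i * d i = lam i * (d i)^2 := by ring
      rw [this, h2]
    show d i * lam i * d i = 1 ∨ d i * lam i * d i = -1
    rcases (hlam i).lt_or_gt with h | h
    · right
      rw [h3, abs_of_neg h, inv_neg, mul_neg, mul_inv_cancel₀ (hlam i)]
    · left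
      rw [h3, abs_of_pos h, mul_inv_cancel₀ (hlam i)]
  · rw [Matrix.transpose_mul, Matrix.diagonal_transpose]
    calc diagonal d * Uᵀ * L * (U * diagonal d)
        = diagonal d * (Uᵀ * L * U) * diagonal d := by simp only [mul_assoc]
      _ = diagonal d * diagonal lam * diagonal d := by rw [hdiag]
      _ = diagonal fun i => d i * lam i * d i := by
          rw [Matrix.diagonal_mul_diagonal, Matrix.diagonal_mul_diagonal]

lemma quadEval_eq {s : ℕ} (Q : Matrix (Fin s) (Fin s) ℝ) (v : Fin s → ℝ) :
    quadEval Q v = v ⬝ᵥ Q *ᵥ v := rfl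

lemma vecMulVec_mulVec' (v u y : Fin s → ℝ) : vecMulVec v u *ᵥ y = (u ⬝ᵥ y) • v := by
  funext i
  simp only [Matrix.mulVec, Matrix.vecMulVec_apply, dotProduct, Pi.smul_apply, smul_eq_mul]
  rw [Finset.sum_mul]
  exact Finset.sum_congr rfl fun j _ => by ring

lemma boost_exists {L : Matrix (Fin s) (Fin s) ℝ} (hL : Lᵀ = L) {v w : Fin s → ℝ}
    (hv : v ⬝ᵥ L *ᵥ v = 0) (hw : w ⬝ᵥ L *ᵥ w = 0) (hb : v ⬝ᵥ L *ᵥ w ≠ 0)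
    {t : ℝ} (ht : t ≠ 0) :
    ∃ H H' : Matrix (Fin s) (Fin s) ℝ, H * H' = 1 ∧ H' * H = 1 ∧
      (∀ y, (H *ᵥ y) ⬝ᵥ L *ᵥ (H *ᵥ y) = y ⬝ᵥ L *ᵥ y) ∧
      H *ᵥ v = t • v ∧ H *ᵥ w = t⁻¹ • w := by
  have hLwv : (L *ᵥ w) ⬝ᵥ v = v ⬝ᵥ L *ᵥ w := dotProduct_comm _ _
  have hLvv : (L *ᵥ v) ⬝ᵥ v = 0 := by rw [dotProduct_comm]; exact hv
  have hLww : (L *ᵥ w) ⬝ᵥ w = 0 := by rw [dotProduct_comm]; exact hw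
  have hLvw : (L *ᵥ v) ⬝ᵥ w = v ⬝ᵥ L *ᵥ w := by
    rw [dotProduct_comm]; exact dot_symm hL w v
  have htinv : t⁻¹ ≠ 0 := inv_ne_zero ht
  set b := v ⬝ᵥ L *ᵥ w with hbdef
  set Hf : ℝ → Matrix (Fin s) (Fin s) ℝ := fun r =>
    1 + ((r - 1)/b) • vecMulVec v (L *ᵥ w) + ((r⁻¹ - 1)/b) • vecMulVec w (L *ᵥ v) with hHf
  have hact : ∀ r y, Hf r *ᵥ y =
      y + (((r - 1)/b) * ((L *ᵥ w) ⬝ᵥ y)) • v + (((r⁻¹ - 1)/b) * ((L *ᵥ v) ⬝ᵥ y)) • w := by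
    intro r y
    simp only [hHf, Matrix.add_mulVec, Matrix.one_mulVec, Matrix.smul_mulVec,
      vecMulVec_mulVec', smul_smul]
  have hdotw : ∀ r y, (L *ᵥ w) ⬝ᵥ (Hf r *ᵥ y) =
      r * ((L *ᵥ w) ⬝ᵥ y) := by
    intro r y
    rw [hact]
    simp only [dotProduct_add, dotProduct_smul, smul_eq_mul, hLwv, hLww]
    field_simp
    ring
  have hdotv : ∀ r y, (L *ᵥ v) ⬝ᵥ (Hf r *ᵥ y) =
      r⁻¹ * ((L *ᵥ v) ⬝ᵥ y) := by
    intro r y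
    rw [hact]
    simp only [dotProduct_add, dotProduct_smul, smul_eq_mul, hLvv, hLvw]
    field_simp
    ring
  have hinv : ∀ r, r ≠ 0 → ∀ y, Hf r *ᵥ (Hf r⁻¹ *ᵥ y) = y := by
    intro r hr y
    rw [hact r, hdotw, hdotv, hact r⁻¹, inv_inv]
    match_scalars
    · ring
    · field_simp
      ring
    · field_simp
      ring
  refine ⟨Hf t, Hf t⁻¹, ?_, ?_, ?_, ?_, ?_⟩
  · exact ext_of_mulVec fun y => by
      rw [← Matrix.mulVec_mulVec, hinv t ht y, Matrix.one_mulVec]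
  · refine ext_of_mulVec fun y => ?_
    have h := hinv t⁻¹ htinv y
    rw [inv_inv] at h
    rw [← Matrix.mulVec_mulVec, h, Matrix.one_mulVec]
  · intro y
    rw [hact]
    have h1 : y ⬝ᵥ L *ᵥ v = L *ᵥ v ⬝ᵥ y := (dotProduct_comm _ _).symm
    have h2 : v ⬝ᵥ L *ᵥ y = L *ᵥ v ⬝ᵥ y := by rw [dot_symm hL v y, h1]
    have h3 : y ⬝ᵥ L *ᵥ w = L *ᵥ w ⬝ᵥ y := (dotProduct_comm _ _).symm
    have h4 : w ⬝ᵥ L *ᵥ y = L *ᵥ w ⬝ᵥ y := by rw [dot_symm hL w y, h3]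
    have h5 : w ⬝ᵥ L *ᵥ v = b := by rw [dot_symm hL w v]
    simp only [Matrix.mulVec_add, Matrix.mulVec_smul, dotProduct_add, add_dotProduct,
      dotProduct_smul, smul_dotProduct, smul_eq_mul]
    simp only [h1, h2, h3, h4, h5, hv, hw]
    field_simp
    ring
  · rw [hact, hLwv, hLvv, mul_zero, zero_smul, add_zero]
    match_scalars
    all_goals (field_simp; try ring)
  · rw [hact, hLww, hLvw, mul_zero, zero_smul]
    match_scalars
    all_goals (field_simp; try ring)

lemma PsL_conj {L Q H H' : Matrix (Fin s) (Fin s) ℝ}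
    (hHH' : H * H' = 1) (hH'H : H' * H = 1)
    (hHL : ∀ y, (H *ᵥ y) ⬝ᵥ L *ᵥ (H *ᵥ y) = y ⬝ᵥ L *ᵥ y)
    (hQ : Q ∈ PsL L) : Hᵀ * Q * H ∈ PsL L := by
  obtain ⟨hpd, hmaj, hmin⟩ := hQ
  have hQsymm := posDef_symm hpd
  have hiv : ∀ y, H *ᵥ (H' *ᵥ y) = y := fun y => by
    rw [Matrix.mulVec_mulVec, hHH', Matrix.one_mulVec]
  have hiv' : ∀ y, H' *ᵥ (H *ᵥ y) = y := fun y => by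
    rw [Matrix.mulVec_mulVec, hH'H, Matrix.one_mulVec]
  have hL2 : ∀ y, y ⬝ᵥ L *ᵥ y = (H' *ᵥ y) ⬝ᵥ L *ᵥ (H' *ᵥ y) := by
    intro y
    have h := hHL (H' *ᵥ y)
    rwa [hiv y] at h
  have hconjsymm : (Hᵀ * Q * H)ᵀ = Hᵀ * Q * H := by
    rw [Matrix.transpose_mul, Matrix.transpose_mul, Matrix.transpose_transpose, hQsymm, mul_assoc]
  refine ⟨posDef_of hconjsymm ?_, ?_, ?_⟩
  · intro x hx
    rw [conj_quad]
    refine posDef_quad_pos hpd fun h0 => hx ?_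
    rw [← hiv' x, h0, Matrix.mulVec_zero]
  · intro x
    rw [conj_quad, ← hHL x]
    exact hmaj _
  · intro Q'' hQ'' hmaj'' hle''
    have hQ''symm := posDef_symm hQ''
    have h1 : (H'ᵀ * Q'' * H').PosDef := by
      refine posDef_of ?_ ?_
      · rw [Matrix.transpose_mul, Matrix.transpose_mul, Matrix.transpose_transpose,
          hQ''symm, mul_assoc]
      · intro x hx
        rw [conj_quad]
        refine posDef_quad_pos hQ'' fun h0 => hx ?_
        rw [← hiv x, h0, Matrix.mulVec_zero]
    have h2 : ∀ x, |x ⬝ᵥ L *ᵥ x| ≤ x ⬝ᵥ (H'ᵀ * Q'' * H') *ᵥ x := by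
      intro x
      rw [conj_quad, hL2 x]
      exact hmaj'' _
    have h3 : ∀ x, x ⬝ᵥ (H'ᵀ * Q'' * H') *ᵥ x ≤ x ⬝ᵥ Q *ᵥ x := by
      intro x
      rw [conj_quad]
      have h4 := hle'' (H' *ᵥ x)
      rwa [conj_quad, hiv x] at h4
    have h5 := hmin _ h1 h2 h3
    refine eq_of_quad_eq hQ''symm hconjsymm fun x => ?_
    calc x ⬝ᵥ Q'' *ᵥ x = (H' *ᵥ (H *ᵥ x)) ⬝ᵥ Q'' *ᵥ (H' *ᵥ (H *ᵥ x)) := by rw [hiv']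
      _ = (H *ᵥ x) ⬝ᵥ (H'ᵀ * Q'' * H') *ᵥ (H *ᵥ x) := (conj_quad H' Q'' (H *ᵥ x)).symm
      _ = (H *ᵥ x) ⬝ᵥ Q *ᵥ (H *ᵥ x) := by rw [h5]
      _ = x ⬝ᵥ (Hᵀ * Q * H) *ᵥ x := (conj_quad H Q x).symm

lemma lower_aux {L Q : Matrix (Fin s) (Fin s) ℝ} (hL : Lᵀ = L)
    (hmaj : ∀ x, |x ⬝ᵥ L *ᵥ x| ≤ x ⬝ᵥ Q *ᵥ x)
    {v w : Fin s → ℝ} (hv : v ⬝ᵥ L *ᵥ v = 0) (hw : w ⬝ᵥ L *ᵥ w = 0)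
    (ha : 0 < v ⬝ᵥ Q *ᵥ v) :
    (v ⬝ᵥ L *ᵥ w)^2 ≤ (v ⬝ᵥ Q *ᵥ v) * (w ⬝ᵥ Q *ᵥ w) := by
  set α : ℝ := (v ⬝ᵥ L *ᵥ w) / (v ⬝ᵥ Q *ᵥ v) with hα
  have e1 := hmaj (α • v + (1:ℝ) • w)
  have e2 := hmaj ((-α) • v + (1:ℝ) • w)
  rw [quad_expand, quad_expand, hv, hw, dot_symm hL w v] at e1 e2
  have u1 := (abs_le.mp e1).2
  have u2 := (abs_le.mp e2).1
  have s1 : 2*(α*(v ⬝ᵥ L *ᵥ w)) ≤ α^2*(v ⬝ᵥ Q *ᵥ v) + (w ⬝ᵥ Q *ᵥ w) := by nlinarith [u1, u2]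
  have s2 : α * (v ⬝ᵥ Q *ᵥ v) = v ⬝ᵥ L *ᵥ w := div_mul_cancel₀ _ (ne_of_gt ha)
  have s3 := mul_le_mul_of_nonneg_left s1 ha.le
  have s4 : α * (v ⬝ᵥ Q *ᵥ v) * (α * (v ⬝ᵥ Q *ᵥ v)) = (v ⬝ᵥ L *ᵥ w) * (v ⬝ᵥ L *ᵥ w) := by
    rw [s2]
  have s5 : α * (v ⬝ᵥ Q *ᵥ v) * (v ⬝ᵥ L *ᵥ w) = (v ⬝ᵥ L *ᵥ w) * (v ⬝ᵥ L *ᵥ w) := by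
    rw [s2]
  nlinarith [s3, s4, s5]

lemma odist_bounds {L : Matrix (Fin s) (Fin s) ℝ}
    (hL : Lᵀ = L)
    {Q₀ : Matrix (Fin s) (Fin s) ℝ} (hQ₀ : Q₀ ∈ PsL L)
    {v w : Fin s → ℝ} (hv0 : v ≠ 0) (hw0 : w ≠ 0)
    (hv : v ⬝ᵥ L *ᵥ v = 0) (hw : w ⬝ᵥ L *ᵥ w = 0) (hb : v ⬝ᵥ L *ᵥ w ≠ 0) :
    2 * Real.sqrt 2 * Real.log |v ⬝ᵥ L *ᵥ w| ≤ odistHb L v w ∧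
      odistHb L v w ≤ Real.sqrt 2 * Real.log ((v ⬝ᵥ Q₀ *ᵥ v) * (w ⬝ᵥ Q₀ *ᵥ w)) := by
  have hA : 0 < v ⬝ᵥ Q₀ *ᵥ v := posDef_quad_pos hQ₀.1 hv0
  have hC : 0 < w ⬝ᵥ Q₀ *ᵥ w := posDef_quad_pos hQ₀.1 hw0
  set t : ℝ := Real.sqrt (w ⬝ᵥ Q₀ *ᵥ w) with htdef
  have htpos : 0 < t := Real.sqrt_pos.2 hC
  have ht2 : t^2 = w ⬝ᵥ Q₀ *ᵥ w := Real.sq_sqrt hC.le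
  obtain ⟨H, H', hHH', hH'H, hHL, hHv, hHw⟩ := boost_exists hL hv hw hb (ne_of_gt htpos)
  have hQt : Hᵀ * Q₀ * H ∈ PsL L := PsL_conj hHH' hH'H hHL hQ₀
  have hQtw : quadEval (Hᵀ * Q₀ * H) w = 1 := by
    rw [quadEval_eq, conj_quad, hHw, quad_smul, inv_pow, ht2]
    exact inv_mul_cancel₀ (ne_of_gt hC)
  have hQtv : quadEval (Hᵀ * Q₀ * H) v = (w ⬝ᵥ Q₀ *ᵥ w) * (v ⬝ᵥ Q₀ *ᵥ v) := by
    rw [quadEval_eq, conj_quad, hHv, quad_smul, ht2]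
  have hmem : Real.sqrt 2 * Real.log ((w ⬝ᵥ Q₀ *ᵥ w) * (v ⬝ᵥ Q₀ *ᵥ v)) ∈
      ((fun Q => Real.sqrt 2 * Real.log (quadEval Q v)) ''
        {Q | Q ∈ PsL L ∧ Real.sqrt 2 * Real.log (quadEval Q w) ≤ 0}) := by
    refine ⟨Hᵀ * Q₀ * H, ⟨hQt, ?_⟩, by simp only [hQtv]⟩
    rw [hQtw, Real.log_one, mul_zero]
  have hlb : ∀ r ∈ ((fun Q => Real.sqrt 2 * Real.log (quadEval Q v)) ''
      {Q | Q ∈ PsL L ∧ Real.sqrt 2 * Real.log (quadEval Q w) ≤ 0}),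
      2 * Real.sqrt 2 * Real.log |v ⬝ᵥ L *ᵥ w| ≤ r := by
    rintro r ⟨Q, ⟨hQ, hball⟩, rfl⟩
    have hQv : 0 < v ⬝ᵥ Q *ᵥ v := posDef_quad_pos hQ.1 hv0
    have hQw : 0 < w ⬝ᵥ Q *ᵥ w := posDef_quad_pos hQ.1 hw0
    have hs2 : (0:ℝ) < Real.sqrt 2 := by positivity
    have hlog0 : Real.log (w ⬝ᵥ Q *ᵥ w) ≤ 0 := by
      by_contra hpos
      push_neg at hpos
      have h6 := mul_pos hs2 hpos
      rw [quadEval_eq] at hball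
      linarith
    have hw1 : w ⬝ᵥ Q *ᵥ w ≤ 1 := (Real.log_nonpos_iff hQw.le).1 hlog0
    have hkey := lower_aux hL hQ.2.1 hv hw hQv
    have h2 : (v ⬝ᵥ L *ᵥ w)^2 ≤ v ⬝ᵥ Q *ᵥ v := by nlinarith
    have hb2 : (0:ℝ) < (v ⬝ᵥ L *ᵥ w)^2 := by positivity
    have hlog : Real.log ((v ⬝ᵥ L *ᵥ w)^2) ≤ Real.log (v ⬝ᵥ Q *ᵥ v) :=
      (Real.log_le_log_iff hb2 hQv).2 h2
    have hsq : Real.log ((v ⬝ᵥ L *ᵥ w)^2) = 2 * Real.log |v ⬝ᵥ L *ᵥ w| := by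
      rw [← sq_abs, Real.log_pow]
      push_cast
      ring
    have hmono := mul_le_mul_of_nonneg_left hlog hs2.le
    simp only [quadEval_eq]
    calc 2 * Real.sqrt 2 * Real.log |v ⬝ᵥ L *ᵥ w|
        = Real.sqrt 2 * Real.log ((v ⬝ᵥ L *ᵥ w)^2) := by rw [hsq]; ring
      _ ≤ Real.sqrt 2 * Real.log (v ⬝ᵥ Q *ᵥ v) := hmono
  constructor
  · rw [odistHb]
    exact le_csInf ⟨_, hmem⟩ hlb
  · rw [odistHb]
    have hbdd : BddBelow ((fun Q => Real.sqrt 2 * Real.log (quadEval Q v)) ''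
      {Q | Q ∈ PsL L ∧ Real.sqrt 2 * Real.log (quadEval Q w) ≤ 0}) := ⟨_, hlb⟩
    have h := csInf_le hbdd hmem
    rw [mul_comm (w ⬝ᵥ Q₀ *ᵥ w)] at h
    exact h

end S13

/-- fix `v₀ ∈ Con_L ∖ {0}` and `ℋ₀ = ker b_L(v₀,·)`. For every compact set `K`
of lines of `Con_L ∖ ℋ₀` (modelled as a compact set of unit vectors of the cone with
`b_L(v₀,·) ≠ 0`, a line lying in `K` iff one of its two unit vectors does), the quantity
`|odist(Hb_{v₀}, Hb_w) − 2√2 ln ‖w‖|` is uniformly bounded over nonzero `w ∈ Con_L` whose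
line lies in `K`. -/
theorem stmt_13 (s : ℕ) (L : Matrix (Fin s) (Fin s) ℝ) (hL : L.IsSymm) (hLdet : L.det ≠ 0)
    (v₀ : Fin s → ℝ) (hv₀ : v₀ ≠ 0) (hv₀Con : v₀ ⬝ᵥ L.mulVec v₀ = 0)
    (K : Set (Fin s → ℝ)) (hK : IsCompact K)
    (hKsub : K ⊆ {u | ‖u‖ = 1 ∧ u ⬝ᵥ L.mulVec u = 0 ∧ v₀ ⬝ᵥ L.mulVec u ≠ 0}) :
    ∃ C : ℝ, ∀ w : Fin s → ℝ, w ≠ 0 →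
      ((‖w‖⁻¹ • w) ∈ K ∨ (-(‖w‖⁻¹ • w)) ∈ K) →
      |odistHb L v₀ w - 2 * Real.sqrt 2 * Real.log ‖w‖| ≤ C := by
  have hLt : Lᵀ = L := hL
  obtain ⟨P, ε, hε, hP⟩ := S13.exists_conj_diag L hLt hLdet
  have hQ₀ : (P⁻¹)ᵀ * P⁻¹ ∈ PsL L := S13.mem_PsL_of_conj hLt hLdet hε hP
  set Q₀ := (P⁻¹)ᵀ * P⁻¹ with hQ₀def
  rcases K.eq_empty_or_nonempty with hKe | hKne
  · refine ⟨0, fun w hw0 hmem => ?_⟩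
    rcases hmem with h | h <;> (rw [hKe] at h; exact absurd h (Set.notMem_empty _))
  have hcont1 : Continuous fun u : Fin s → ℝ => |v₀ ⬝ᵥ L *ᵥ u| := by
    apply Continuous.abs
    simp only [dotProduct, Matrix.mulVec]
    exact continuous_finset_sum _ fun i _ => continuous_const.mul
      (continuous_finset_sum _ fun j _ => continuous_const.mul (continuous_apply j))
  have hcont2 : Continuous fun u : Fin s → ℝ => u ⬝ᵥ Q₀ *ᵥ u := by
    simp only [dotProduct, Matrix.mulVec]
    exact continuous_finset_sum _ fun i _ => (continuous_apply i).mul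
      (continuous_finset_sum _ fun j _ => continuous_const.mul (continuous_apply j))
  obtain ⟨um, humK, hum⟩ := hK.exists_isMinOn hKne hcont1.continuousOn
  obtain ⟨uM, huMK, huM⟩ := hK.exists_isMaxOn hKne hcont2.continuousOn
  set m := |v₀ ⬝ᵥ L *ᵥ um| with hmdef
  set M₂ := uM ⬝ᵥ Q₀ *ᵥ uM with hM₂def
  have hmpos : 0 < m := abs_pos.2 (hKsub humK).2.2
  have hApos : 0 < v₀ ⬝ᵥ Q₀ *ᵥ v₀ := S13.posDef_quad_pos hQ₀.1 hv₀
  set A := v₀ ⬝ᵥ Q₀ *ᵥ v₀ with hAdef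
  refine ⟨max (2 * Real.sqrt 2 * |Real.log m|)
      (Real.sqrt 2 * |Real.log A| + Real.sqrt 2 * |Real.log M₂|), ?_⟩
  intro w hw0 hmem
  have hnw : (0:ℝ) < ‖w‖ := norm_pos_iff.2 hw0
  obtain ⟨u, huK, c, hc2, hcne, hwu⟩ : ∃ u ∈ K, ∃ c : ℝ, c^2 = ‖w‖^2 ∧ c ≠ 0 ∧ w = c • u := by
    rcases hmem with h | h
    · refine ⟨_, h, ‖w‖, rfl, hnw.ne', ?_⟩
      rw [smul_smul, mul_inv_cancel₀ hnw.ne', one_smul]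
    · refine ⟨_, h, -‖w‖, by ring, neg_ne_zero.2 hnw.ne', ?_⟩
      rw [smul_neg, neg_smul, neg_neg, smul_smul, mul_inv_cancel₀ hnw.ne', one_smul]
  obtain ⟨hu1, huCon, hub⟩ := hKsub huK
  have hune : u ≠ 0 := by intro h0; rw [h0] at hu1; simp at hu1
  have hwCon : w ⬝ᵥ L *ᵥ w = 0 := by rw [hwu, S13.quad_smul, huCon, mul_zero]
  have hbw : v₀ ⬝ᵥ L *ᵥ w = c * (v₀ ⬝ᵥ L *ᵥ u) := by
    rw [hwu, Matrix.mulVec_smul, dotProduct_smul, smul_eq_mul]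
  have hbwne : v₀ ⬝ᵥ L *ᵥ w ≠ 0 := by rw [hbw]; exact mul_ne_zero hcne hub
  have hcabs : |c| = ‖w‖ := by
    rcases sq_eq_sq_iff_eq_or_eq_neg.mp hc2 with h | h
    · rw [h, abs_of_pos hnw]
    · rw [h, abs_neg, abs_of_pos hnw]
  have habsb : |v₀ ⬝ᵥ L *ᵥ w| = ‖w‖ * |v₀ ⬝ᵥ L *ᵥ u| := by rw [hbw, abs_mul, hcabs]
  have hQw : w ⬝ᵥ Q₀ *ᵥ w = ‖w‖^2 * (u ⬝ᵥ Q₀ *ᵥ u) := by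
    conv_lhs => rw [hwu]
    rw [S13.quad_smul, hc2]
  obtain ⟨hlow, hup⟩ := S13.odist_bounds hLt hQ₀ hv₀ hw0 hv₀Con hwCon hbwne
  have hQu : 0 < u ⬝ᵥ Q₀ *ᵥ u := S13.posDef_quad_pos hQ₀.1 hune
  have huMne : uM ≠ 0 := by
    have h1 := (hKsub huMK).1
    intro h0; rw [h0] at h1; simp at h1
  have hM₂pos : 0 < M₂ := S13.posDef_quad_pos hQ₀.1 huMne
  have hs2 : (0:ℝ) ≤ Real.sqrt 2 := Real.sqrt_nonneg 2
  have hmle : m ≤ |v₀ ⬝ᵥ L *ᵥ u| := isMinOn_iff.1 hum u huK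
  have hMle : u ⬝ᵥ Q₀ *ᵥ u ≤ M₂ := isMaxOn_iff.1 huM u huK
  rw [abs_le]
  constructor
  · have e1 : Real.log |v₀ ⬝ᵥ L *ᵥ w| = Real.log ‖w‖ + Real.log |v₀ ⬝ᵥ L *ᵥ u| := by
      rw [habsb, Real.log_mul hnw.ne' (abs_ne_zero.2 hub)]
    have e2 : Real.log m ≤ Real.log |v₀ ⬝ᵥ L *ᵥ u| :=
      (Real.log_le_log_iff hmpos (abs_pos.2 hub)).2 hmle
    have e3 := mul_le_mul_of_nonneg_left e2 (by positivity : (0:ℝ) ≤ 2 * Real.sqrt 2)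
    have e4 : -(2 * Real.sqrt 2 * |Real.log m|) ≤ 2 * Real.sqrt 2 * Real.log m := by
      have h7 := mul_le_mul_of_nonneg_left (neg_abs_le (Real.log m))
        (by positivity : (0:ℝ) ≤ 2 * Real.sqrt 2)
      linarith
    have e5 : -(max (2 * Real.sqrt 2 * |Real.log m|)
        (Real.sqrt 2 * |Real.log A| + Real.sqrt 2 * |Real.log M₂|)) ≤
        -(2 * Real.sqrt 2 * |Real.log m|) := neg_le_neg (le_max_left _ _)
    have e6 : 2 * Real.sqrt 2 * Real.log |v₀ ⬝ᵥ L *ᵥ w| - 2 * Real.sqrt 2 * Real.log ‖w‖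
        = 2 * Real.sqrt 2 * Real.log |v₀ ⬝ᵥ L *ᵥ u| := by rw [e1]; ring
    linarith [hlow]
  · have f1 : Real.log (A * (w ⬝ᵥ Q₀ *ᵥ w)) =
        Real.log A + 2 * Real.log ‖w‖ + Real.log (u ⬝ᵥ Q₀ *ᵥ u) := by
      rw [hQw, Real.log_mul (ne_of_gt hApos) (by positivity),
        Real.log_mul (by positivity) (ne_of_gt hQu), Real.log_pow]
      push_cast; ring
    have f2 : Real.log (u ⬝ᵥ Q₀ *ᵥ u) ≤ Real.log M₂ := (Real.log_le_log_iff hQu hM₂pos).2 hMle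
    have f3 := mul_le_mul_of_nonneg_left f2 hs2
    have f4 := mul_le_mul_of_nonneg_left (le_abs_self (Real.log A)) hs2
    have f5 := mul_le_mul_of_nonneg_left (le_abs_self (Real.log M₂)) hs2
    have f6 := le_max_right (2 * Real.sqrt 2 * |Real.log m|)
      (Real.sqrt 2 * |Real.log A| + Real.sqrt 2 * |Real.log M₂|)
    have f7 : Real.sqrt 2 * Real.log (A * (w ⬝ᵥ Q₀ *ᵥ w)) - 2 * Real.sqrt 2 * Real.log ‖w‖
        = Real.sqrt 2 * Real.log A + Real.sqrt 2 * Real.log (u ⬝ᵥ Q₀ *ᵥ u) := by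
      rw [f1]; ring
    linarith [hup]
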